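/- arXiv:2309.09061 — 8 statements merged into one kernel-verified Lean document; each statement's English description precedes it below -/
import Mathlib

section
/- Let Q₁ (T₁×L₁) and Q₂ (T₂×L₂) be isometric real matrices, R₁ (L₁×K), R₂ (L₂×K), F₁ (K×K), F₂ (K×K) real matrices, and set W := fromRows (Q₁ * R₁ * F₁) (Q₂ * R₂ * F₂), a (T₁⊕T₂)×K matrix, and Ŵ := fromRows (R₁ * F₁) (R₂ * F₂), an (L₁⊕L₂)×K matrix. Suppose Ŵ = Q̂ * R with Q̂ an isometric (L₁⊕L₂)×L matrix and R an L×K matrix. Then W = Q * R with Q := (fromBlocks Q₁ 0 0 Q₂) * Q̂, and Q is isometric. -/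
open Matrix

/-- Correctness of the recursive basis-weight construction: a thin orthogonal
factorization of the condensed matrix `Ŵ` yields one of the full cluster basis matrix `W`. -/
theorem stmt_7 {T₁ T₂ L₁ L₂ K L : Type*}
    [Fintype T₁] [DecidableEq T₁] [Fintype T₂] [DecidableEq T₂]
    [Fintype L₁] [DecidableEq L₁] [Fintype L₂] [DecidableEq L₂]
    [Fintype K] [DecidableEq K] [Fintype L] [DecidableEq L]
    (Q₁ : Matrix T₁ L₁ ℝ) (Q₂ : Matrix T₂ L₂ ℝ)
    (hQ₁ : Q₁ᵀ * Q₁ = 1) (hQ₂ : Q₂ᵀ * Q₂ = 1)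
    (R₁ : Matrix L₁ K ℝ) (R₂ : Matrix L₂ K ℝ) (F₁ : Matrix K K ℝ) (F₂ : Matrix K K ℝ)
    (Qhat : Matrix (L₁ ⊕ L₂) L ℝ) (R : Matrix L K ℝ)
    (hQhat : Qhatᵀ * Qhat = 1)
    (hWhat : fromRows (R₁ * F₁) (R₂ * F₂) = Qhat * R) :
    fromRows (Q₁ * R₁ * F₁) (Q₂ * R₂ * F₂) = ((fromBlocks Q₁ 0 0 Q₂) * Qhat) * R ∧
      ((fromBlocks Q₁ 0 0 Q₂) * Qhat)ᵀ * ((fromBlocks Q₁ 0 0 Q₂) * Qhat) = 1 := by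
  constructor
  · rw [Matrix.mul_assoc (fromBlocks Q₁ 0 0 Q₂), ← hWhat, Matrix.fromBlocks_mul_fromRows]
    simp [Matrix.mul_assoc]
  · rw [Matrix.transpose_mul, Matrix.fromBlocks_transpose, Matrix.mul_assoc,
      ← Matrix.mul_assoc (fromBlocks Q₁ᵀ 0ᵀ 0ᵀ Q₂ᵀ), Matrix.fromBlocks_multiply]
    simp [hQ₁, hQ₂, Matrix.fromBlocks_one, hQhat]
end

section
/- Let Q_X be a real T×(K₁⊕T₂) matrix that is orthogonal: Q_Xᵀ * Q_X = 1 and Q_X * Q_Xᵀ = 1. Let R be a K₁×K matrix and set V_X := Q_X * fromRows R (0 : Matrix T₂ K). Let Q̃ be an isometric T₂×K₂ matrix and define Q := Q_X * fromBlocks 1 0 0 Q̃, of size T×(K₁⊕K₂). Then Q is isometric and Q * Qᵀ * V_X = V_X, i.e., the range of V_X is preserved exactly by the orthogonal projection onto the range of Q. -/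
open Matrix

/-- Preservation of the old row basis in the compression step: with
`V_X = Q_X * [R; 0]` and `Q = Q_X * diag(I, Q̃)`, the matrix `Q` is isometric and the
projection `Q Qᵀ` leaves `V_X` untouched. -/
theorem stmt_8 {T T₂ K₁ K₂ K : Type*}
    [Fintype T] [DecidableEq T] [Fintype T₂] [DecidableEq T₂]
    [Fintype K₁] [DecidableEq K₁] [Fintype K₂] [DecidableEq K₂]
    [Fintype K] [DecidableEq K]
    (Q_X : Matrix T (K₁ ⊕ T₂) ℝ)
    (hQX₁ : Q_Xᵀ * Q_X = 1) (hQX₂ : Q_X * Q_Xᵀ = 1)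
    (R : Matrix K₁ K ℝ) (Qtilde : Matrix T₂ K₂ ℝ) (hQt : Qtildeᵀ * Qtilde = 1) :
    ((Q_X * fromBlocks (1 : Matrix K₁ K₁ ℝ) 0 0 Qtilde)ᵀ * (Q_X * fromBlocks (1 : Matrix K₁ K₁ ℝ) 0 0 Qtilde) = 1) ∧
      (Q_X * fromBlocks (1 : Matrix K₁ K₁ ℝ) 0 0 Qtilde) * (Q_X * fromBlocks (1 : Matrix K₁ K₁ ℝ) 0 0 Qtilde)ᵀ *
          (Q_X * fromRows R (0 : Matrix T₂ K ℝ)) =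
        Q_X * fromRows R (0 : Matrix T₂ K ℝ) := by
  constructor
  · rw [transpose_mul, Matrix.mul_assoc, ← Matrix.mul_assoc Q_Xᵀ, hQX₁, Matrix.one_mul,
      fromBlocks_transpose, fromBlocks_multiply]
    simp [hQt, fromBlocks_one]
  · rw [transpose_mul]
    simp only [Matrix.mul_assoc]
    rw [← Matrix.mul_assoc Q_Xᵀ Q_X, hQX₁,
      Matrix.one_mul, fromBlocks_transpose, fromBlocks_mul_fromRows, Matrix.mul_zero,
      fromBlocks_mul_fromRows]
    simp
end

section
/- Let V_X be a real T×K matrix, S_X a K×K matrix, and W_X an S×K matrix; set X_block := V_X * S_X * W_Xᵀ. Let Y_block be a real S×R matrix. For any R×K' matrix W_Y define W_r := fromColumns W_Y (Y_blockᵀ * W_X) (an R×(K'⊕K) matrix) and S_tr := fromColumns (0 : Matrix K K') S_X (a K×(K'⊕K) matrix). Then X_block * Y_block = V_X * S_tr * W_rᵀ. -/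
open Matrix

theorem Matrix.fromCols_zero_mul_transpose_fromCols {α m n o p : Type*} [Semiring α]
    [Fintype n] [Fintype o] (A : Matrix m o α) (B : Matrix p n α) (C : Matrix p o α) :
    fromCols (0 : Matrix m n α) A * (fromCols B C)ᵀ = A * Cᵀ := by
  rw [transpose_fromCols, fromCols_mul_fromRows, Matrix.zero_mul, zero_add]

theorem stmt_11_general {T S R K K' : Type*}
    [Fintype S] [Fintype K] [Fintype K']
    (V_X : Matrix T K ℝ) (S_X : Matrix K K ℝ) (W_X : Matrix S K ℝ)
    (Y_block : Matrix S R ℝ) (W_Y : Matrix R K' ℝ) :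
    (V_X * S_X * W_Xᵀ) * Y_block =
      V_X * (fromCols (0 : Matrix K K' ℝ) S_X) *
        (fromCols W_Y (Y_blockᵀ * W_X))ᵀ := by
  rw [Matrix.mul_assoc V_X (fromCols 0 S_X), fromCols_zero_mul_transpose_fromCols, transpose_mul,
    transpose_transpose]
  simp only [Matrix.mul_assoc]

/-- Dual padding construction for the induced column cluster basis: if
`X_block = V_X * S_X * W_Xᵀ`, then the product `X_block * Y_block` is represented
exactly in the induced column basis `W_r = [W_Y, Y_blockᵀ * W_X]` with coupling matrix
`S_tr = [0, S_X]`. -/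
theorem stmt_11 {T S R K K' : Type*}
    [Fintype T] [Fintype S] [Fintype R] [Fintype K] [Fintype K']
    (V_X : Matrix T K ℝ) (S_X : Matrix K K ℝ) (W_X : Matrix S K ℝ)
    (Y_block : Matrix S R ℝ) (W_Y : Matrix R K' ℝ) :
    (V_X * S_X * W_Xᵀ) * Y_block =
      V_X * (fromCols (0 : Matrix K K' ℝ) S_X) *
        (fromCols W_Y (Y_blockᵀ * W_X))ᵀ :=
  stmt_11_general V_X S_X W_X Y_block W_Y
end

section
/- Let Z⁺ be a real L⁺×K matrix, E a K×K matrix, A an m×K matrix, and set Â := fromRows (Z⁺ * Eᵀ) A, an (L⁺⊕m)×K matrix. Suppose Â = P * Z with P isometric (Pᵀ P = 1) and Z an L×K matrix. Then for every real T×K matrix M: ‖M * Zᵀ‖₂ = ‖M * Âᵀ‖₂; moreover ‖M * Aᵀ‖₂ ≤ ‖M * Zᵀ‖₂ and ‖M * E * Z⁺ᵀ‖₂ ≤ ‖M * Zᵀ‖₂. -/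
open Matrix
open scoped Matrix.Norms.L2Operator

/-! Since `Pᵀ P = 1`, multiplying `M Zᵀ` on the right by `Pᵀ` preserves its spectral norm, which
gives the identity `‖M Zᵀ‖ = ‖M Âᵀ‖`. The matrix `M Âᵀ` is the block row `[M E Z⁺ᵀ | M Aᵀ]`, and each
block is `M Âᵀ` times a coordinate isometry, hence of no larger norm. -/

namespace Matrix

variable {𝕜 : Type*} [RCLike 𝕜] {l m n : Type*} [Fintype l] [Fintype m] [Fintype n]
  [DecidableEq n]

lemma l2_opNorm_one_le : ‖(1 : Matrix n n 𝕜)‖ ≤ 1 := by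
  rw [← diagonal_one, l2_opNorm_diagonal]
  exact pi_norm_le_iff_of_nonneg zero_le_one |>.mpr fun _ => norm_one.le

lemma l2_opNorm_le_one_of_conjTranspose_mul_self_eq_one {Q : Matrix m n 𝕜}
    (hQ : Qᴴ * Q = 1) : ‖Q‖ ≤ 1 := by
  have h : ‖Q‖ * ‖Q‖ ≤ 1 := by
    rw [← l2_opNorm_conjTranspose_mul_self, hQ]
    exact l2_opNorm_one_le
  nlinarith [norm_nonneg Q]

variable [DecidableEq m]

lemma l2_opNorm_mul_le_of_conjTranspose_mul_self_eq_one {Q : Matrix m n 𝕜}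
    (hQ : Qᴴ * Q = 1) (X : Matrix l m 𝕜) : ‖X * Q‖ ≤ ‖X‖ :=
  calc ‖X * Q‖ ≤ ‖X‖ * ‖Q‖ := l2_opNorm_mul X Q
    _ ≤ ‖X‖ := mul_le_of_le_one_right (norm_nonneg X)
      (l2_opNorm_le_one_of_conjTranspose_mul_self_eq_one hQ)

lemma l2_opNorm_mul_conjTranspose_of_conjTranspose_mul_self_eq_one
    {Q : Matrix m n 𝕜} (hQ : Qᴴ * Q = 1) (X : Matrix l n 𝕜) :
    ‖X * Qᴴ‖ = ‖X‖ := by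
  refine le_antisymm ?_ ?_
  · calc ‖X * Qᴴ‖ ≤ ‖X‖ * ‖Qᴴ‖ := l2_opNorm_mul X Qᴴ
      _ ≤ ‖X‖ := by
        rw [l2_opNorm_conjTranspose]
        exact mul_le_of_le_one_right (norm_nonneg X)
          (l2_opNorm_le_one_of_conjTranspose_mul_self_eq_one hQ)
  · calc ‖X‖ = ‖X * Qᴴ * Q‖ := by rw [Matrix.mul_assoc, hQ, Matrix.mul_one]
      _ ≤ ‖X * Qᴴ‖ := l2_opNorm_mul_le_of_conjTranspose_mul_self_eq_one hQ _

lemma l2_opNorm_le_fromCols_left (N₁ : Matrix l m 𝕜) (N₂ : Matrix l n 𝕜) :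
    ‖N₁‖ ≤ ‖fromCols N₁ N₂‖ := by
  let Q : Matrix (m ⊕ n) m 𝕜 := fromRows 1 0
  have hQ : Qᴴ * Q = 1 := by
    simp [Q, conjTranspose_fromRows_eq_fromCols_conjTranspose, fromCols_mul_fromRows]
  simpa [Q, fromCols_mul_fromRows] using
    l2_opNorm_mul_le_of_conjTranspose_mul_self_eq_one hQ (fromCols N₁ N₂)

lemma l2_opNorm_le_fromCols_right (N₁ : Matrix l m 𝕜) (N₂ : Matrix l n 𝕜) :
    ‖N₂‖ ≤ ‖fromCols N₁ N₂‖ := by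
  let Q : Matrix (m ⊕ n) n 𝕜 := fromRows 0 1
  have hQ : Qᴴ * Q = 1 := by
    simp [Q, conjTranspose_fromRows_eq_fromCols_conjTranspose, fromCols_mul_fromRows]
  simpa [Q, fromCols_mul_fromRows] using
    l2_opNorm_mul_le_of_conjTranspose_mul_self_eq_one hQ (fromCols N₁ N₂)

end Matrix

theorem stmt_12_general {Lp m K L T : Type*}
    [Fintype Lp] [DecidableEq Lp] [Fintype m] [DecidableEq m]
    [Fintype K] [Fintype L] [DecidableEq L]
    [Fintype T]
    (Zp : Matrix Lp K ℝ) (E : Matrix K K ℝ) (A : Matrix m K ℝ)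
    (P : Matrix (Lp ⊕ m) L ℝ) (Z : Matrix L K ℝ)
    (hP : Pᵀ * P = 1)
    (hPZ : fromRows (Zp * Eᵀ) A = P * Z) :
    ∀ M : Matrix T K ℝ,
      ‖M * Zᵀ‖ = ‖M * (fromRows (Zp * Eᵀ) A)ᵀ‖ ∧
      ‖M * Aᵀ‖ ≤ ‖M * Zᵀ‖ ∧
      ‖M * E * Zpᵀ‖ ≤ ‖M * Zᵀ‖ := by
  intro M
  rw [← conjTranspose_eq_transpose_of_trivial] at hP
  have hnorm : ‖M * Zᵀ‖ = ‖M * (fromRows (Zp * Eᵀ) A)ᵀ‖ := by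
    rw [hPZ, transpose_mul, ← Matrix.mul_assoc, ← conjTranspose_eq_transpose_of_trivial P,
      l2_opNorm_mul_conjTranspose_of_conjTranspose_mul_self_eq_one hP]
  have hblocks : M * (fromRows (Zp * Eᵀ) A)ᵀ = fromCols (M * E * Zpᵀ) (M * Aᵀ) := by
    rw [transpose_fromRows, mul_fromCols, transpose_mul, transpose_transpose, Matrix.mul_assoc]
  rw [hnorm, hblocks]
  exact ⟨rfl, l2_opNorm_le_fromCols_right _ _, l2_opNorm_le_fromCols_left _ _⟩

/-- Correctness of the total-weight recursion: the total weight `Z` obtained by a thin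
orthogonal factorization of the stacked matrix containing the parent's translated weight
`Z⁺ Eᵀ` and the cluster's own weights `A` dominates both contributions in spectral norm. -/
theorem stmt_12 {Lp m K L T : Type*}
    [Fintype Lp] [DecidableEq Lp] [Fintype m] [DecidableEq m]
    [Fintype K] [DecidableEq K] [Fintype L] [DecidableEq L]
    [Fintype T] [DecidableEq T]
    (Zp : Matrix Lp K ℝ) (E : Matrix K K ℝ) (A : Matrix m K ℝ)
    (P : Matrix (Lp ⊕ m) L ℝ) (Z : Matrix L K ℝ)
    (hP : Pᵀ * P = 1)
    (hPZ : fromRows (Zp * Eᵀ) A = P * Z) :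
    ∀ M : Matrix T K ℝ,
      ‖M * Zᵀ‖ = ‖M * (fromRows (Zp * Eᵀ) A)ᵀ‖ ∧
      ‖M * Aᵀ‖ ≤ ‖M * Zᵀ‖ ∧
      ‖M * E * Zpᵀ‖ ≤ ‖M * Zᵀ‖ :=
  stmt_12_general Zp E A P Z hP hPZ
end

section
/- Let V₁ (T₁×K), V₂ (T₂×K), S₁₁, S₁₂, S₂₁, S₂₂ (K×K), W₁ (R₁×K), W₂ (R₂×K) be real matrices and set G := fromBlocks (V₁*S₁₁*W₁ᵀ) (V₁*S₁₂*W₂ᵀ) (V₂*S₂₁*W₁ᵀ) (V₂*S₂₂*W₂ᵀ) and C := fromBlocks (V₁*S₁₁) (V₁*S₁₂) (V₂*S₂₁) (V₂*S₂₂). Then G = C * fromBlocks W₁ᵀ 0 0 W₂ᵀ, and if W₁ and W₂ are isometric (W₁ᵀW₁ = 1, W₂ᵀW₂ = 1), then for every (T₁⊕T₂)×m matrix Q: ‖G − Q * Qᵀ * G‖₂ = ‖C − Q * Qᵀ * C‖₂. -/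
/-!
`G = C * W` with `W = diag(W₁ᵀ, W₂ᵀ)`, hence `G - Q Qᵀ G = (C - Q Qᵀ C) * W`. If `W₁, W₂` are
isometric then `W Wᵀ = 1`, so right multiplication by `W` leaves `A Aᵀ` unchanged, and by the
C⋆-identity `‖A‖² = ‖A Aᵀ‖` it leaves the spectral norm unchanged too.
-/

open Matrix
open scoped Matrix.Norms.L2Operator

namespace Matrix

section BlockDiagonal

variable {α l m n o p q : Type*}

theorem fromBlocks_mul_fromBlocks_zero [Fintype l] [Fintype m] [NonUnitalNonAssocSemiring α]
    (A : Matrix n l α) (B : Matrix n m α) (C : Matrix o l α) (D : Matrix o m α)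
    (E : Matrix l p α) (F : Matrix m q α) :
    fromBlocks A B C D * fromBlocks E 0 0 F = fromBlocks (A * E) (B * F) (C * E) (D * F) := by
  simp only [fromBlocks_multiply, Matrix.mul_zero, add_zero, zero_add]

theorem fromBlocks_zero_mul_conjTranspose_eq_one [Semiring α] [StarRing α]
    [Fintype p] [Fintype q] [DecidableEq l] [DecidableEq m] {E : Matrix l p α} {F : Matrix m q α}
    (hE : E * Eᴴ = 1) (hF : F * Fᴴ = 1) :
    fromBlocks E 0 0 F * (fromBlocks E 0 0 F)ᴴ = 1 := by
  rw [fromBlocks_conjTranspose, conjTranspose_zero, conjTranspose_zero,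
    fromBlocks_mul_fromBlocks_zero, hE, hF, Matrix.zero_mul, Matrix.zero_mul, fromBlocks_one]

end BlockDiagonal

section L2OpNorm

variable {𝕜 m n l : Type*} [RCLike 𝕜] [Fintype m] [Fintype n] [DecidableEq n]

lemma l2_opNorm_mul_conjTranspose_self [DecidableEq m] (A : Matrix m n 𝕜) :
    ‖A * Aᴴ‖ = ‖A‖ * ‖A‖ := by
  simpa only [conjTranspose_conjTranspose, l2_opNorm_conjTranspose] using
    l2_opNorm_conjTranspose_mul_self Aᴴ

lemma l2_opNorm_eq_of_mul_conjTranspose_eq [Fintype l] [DecidableEq l]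
    {A : Matrix m n 𝕜} {B : Matrix m l 𝕜} (h : A * Aᴴ = B * Bᴴ) : ‖A‖ = ‖B‖ := by
  classical
  have hsq : ‖A‖ * ‖A‖ = ‖B‖ * ‖B‖ := by
    rw [← l2_opNorm_mul_conjTranspose_self, ← l2_opNorm_mul_conjTranspose_self, h]
  exact (mul_self_inj (norm_nonneg A) (norm_nonneg B)).mp hsq

lemma l2_opNorm_mul_of_mul_conjTranspose_eq_one [Fintype l] [DecidableEq l]
    (A : Matrix m n 𝕜) {W : Matrix n l 𝕜} (hW : W * Wᴴ = 1) : ‖A * W‖ = ‖A‖ :=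
  l2_opNorm_eq_of_mul_conjTranspose_eq <| by
    rw [conjTranspose_mul, Matrix.mul_assoc, ← Matrix.mul_assoc W, hW, Matrix.one_mul]

end L2OpNorm

end Matrix

theorem stmt_14_general {T₁ T₂ R₁ R₂ K m : Type*}
    [Fintype T₁] [Fintype T₂]
    [Fintype R₁] [DecidableEq R₁] [Fintype R₂] [DecidableEq R₂]
    [Fintype K] [DecidableEq K] [Fintype m]
    (V₁ : Matrix T₁ K ℝ) (V₂ : Matrix T₂ K ℝ)
    (S₁₁ S₁₂ S₂₁ S₂₂ : Matrix K K ℝ)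
    (W₁ : Matrix R₁ K ℝ) (W₂ : Matrix R₂ K ℝ) :
    fromBlocks (V₁ * S₁₁ * W₁ᵀ) (V₁ * S₁₂ * W₂ᵀ) (V₂ * S₂₁ * W₁ᵀ) (V₂ * S₂₂ * W₂ᵀ) =
        (fromBlocks (V₁ * S₁₁) (V₁ * S₁₂) (V₂ * S₂₁) (V₂ * S₂₂)) *
          fromBlocks W₁ᵀ 0 0 W₂ᵀ ∧
      (W₁ᵀ * W₁ = 1 → W₂ᵀ * W₂ = 1 →
        ∀ Q : Matrix (T₁ ⊕ T₂) m ℝ,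
          ‖fromBlocks (V₁ * S₁₁ * W₁ᵀ) (V₁ * S₁₂ * W₂ᵀ)
                (V₂ * S₂₁ * W₁ᵀ) (V₂ * S₂₂ * W₂ᵀ) -
              Q * Qᵀ * fromBlocks (V₁ * S₁₁ * W₁ᵀ) (V₁ * S₁₂ * W₂ᵀ)
                (V₂ * S₂₁ * W₁ᵀ) (V₂ * S₂₂ * W₂ᵀ)‖ =
            ‖fromBlocks (V₁ * S₁₁) (V₁ * S₁₂) (V₂ * S₂₁) (V₂ * S₂₂) -
              Q * Qᵀ * fromBlocks (V₁ * S₁₁) (V₁ * S₁₂) (V₂ * S₂₁) (V₂ * S₂₂)‖) := by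
  have hfactor := (fromBlocks_mul_fromBlocks_zero (V₁ * S₁₁) (V₁ * S₁₂) (V₂ * S₂₁) (V₂ * S₂₂)
    W₁ᵀ W₂ᵀ).symm
  refine ⟨hfactor, fun h₁ h₂ Q => ?_⟩
  have hW : fromBlocks W₁ᵀ 0 0 W₂ᵀ * (fromBlocks W₁ᵀ 0 0 W₂ᵀ)ᴴ = 1 := by
    refine fromBlocks_zero_mul_conjTranspose_eq_one ?_ ?_ <;>
      rwa [conjTranspose_eq_transpose_of_trivial, transpose_transpose]
  rw [hfactor, ← Matrix.mul_assoc (Q * Qᵀ), ← Matrix.sub_mul,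
    l2_opNorm_mul_of_mul_conjTranspose_eq_one _ hW]

/-- Coarsening condensation for a block subdivided into four admissible sub-blocks:
the isometric block-diagonal right factor built from `W₁, W₂` can be dropped without
changing the projection error. -/
theorem stmt_14 {T₁ T₂ R₁ R₂ K m : Type*}
    [Fintype T₁] [DecidableEq T₁] [Fintype T₂] [DecidableEq T₂]
    [Fintype R₁] [DecidableEq R₁] [Fintype R₂] [DecidableEq R₂]
    [Fintype K] [DecidableEq K] [Fintype m] [DecidableEq m]
    (V₁ : Matrix T₁ K ℝ) (V₂ : Matrix T₂ K ℝ)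
    (S₁₁ S₁₂ S₂₁ S₂₂ : Matrix K K ℝ)
    (W₁ : Matrix R₁ K ℝ) (W₂ : Matrix R₂ K ℝ) :
    fromBlocks (V₁ * S₁₁ * W₁ᵀ) (V₁ * S₁₂ * W₂ᵀ) (V₂ * S₂₁ * W₁ᵀ) (V₂ * S₂₂ * W₂ᵀ) =
        (fromBlocks (V₁ * S₁₁) (V₁ * S₁₂) (V₂ * S₂₁) (V₂ * S₂₂)) *
          fromBlocks W₁ᵀ 0 0 W₂ᵀ ∧
      (W₁ᵀ * W₁ = 1 → W₂ᵀ * W₂ = 1 →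
        ∀ Q : Matrix (T₁ ⊕ T₂) m ℝ,
          ‖fromBlocks (V₁ * S₁₁ * W₁ᵀ) (V₁ * S₁₂ * W₂ᵀ)
                (V₂ * S₂₁ * W₁ᵀ) (V₂ * S₂₂ * W₂ᵀ) -
              Q * Qᵀ * fromBlocks (V₁ * S₁₁ * W₁ᵀ) (V₁ * S₁₂ * W₂ᵀ)
                (V₂ * S₂₁ * W₁ᵀ) (V₂ * S₂₂ * W₂ᵀ)‖ =
            ‖fromBlocks (V₁ * S₁₁) (V₁ * S₁₂) (V₂ * S₂₁) (V₂ * S₂₂) -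
              Q * Qᵀ * fromBlocks (V₁ * S₁₁) (V₁ * S₁₂) (V₂ * S₂₁) (V₂ * S₂₂)‖) :=
  stmt_14_general V₁ V₂ S₁₁ S₁₂ S₂₁ S₂₂ W₁ W₂
end

section
/- Let V be a real T×K matrix, S₁, S₂ K×K matrices, W₁ (R₁×K) and W₂ (R₂×K) isometric matrices, and set G := fromColumns (V*S₁*W₁ᵀ) (V*S₂*W₂ᵀ), a T×(R₁⊕R₂) matrix. Suppose the stacked matrix fromRows S₁ᵀ S₂ᵀ factors as P * Z with P an isometric (K⊕K)×L matrix and Z an L×K matrix. Then for every T×m matrix Q: ‖(1 − Q * Qᵀ) * G‖₂ = ‖(1 − Q * Qᵀ) * V * Zᵀ‖₂. -/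
open Matrix
open scoped Matrix.Norms.L2Operator

/-!
Put `W := fromBlocks W₁ 0 0 W₂`, an isometry. Then the concatenation is `V * fromCols S₁ S₂ * Wᵀ`,
and transposing the factorization gives `fromCols S₁ S₂ = Zᵀ * Pᵀ`, so
`(1 - Q Qᵀ) G = (1 - Q Qᵀ) V Zᵀ * (W P)ᵀ`. Since `W P` again has orthonormal columns, multiplying
by `(W P)ᵀ` on the right does not change the spectral norm.
-/

namespace Matrix

section L2OpNorm

variable {𝕜 l m n : Type*} [RCLike 𝕜] [Fintype l] [Fintype m] [Fintype n]

lemma l2_opNorm_mul_of_conjTranspose_mul_self_eq_one [DecidableEq l] [DecidableEq n]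
    {U : Matrix m n 𝕜} (hU : Uᴴ * U = 1) (B : Matrix n l 𝕜) : ‖U * B‖ = ‖B‖ := by
  refine (mul_self_inj (norm_nonneg _) (norm_nonneg _)).mp ?_
  rw [← l2_opNorm_conjTranspose_mul_self, ← l2_opNorm_conjTranspose_mul_self, conjTranspose_mul,
    Matrix.mul_assoc, ← Matrix.mul_assoc Uᴴ, hU, Matrix.one_mul]

lemma l2_opNorm_mul_conjTranspose_of_conjTranspose_mul_self_eq_one_s15 [DecidableEq l]
    [DecidableEq m] [DecidableEq n] (A : Matrix l n 𝕜) {U : Matrix m n 𝕜} (hU : Uᴴ * U = 1) :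
    ‖A * Uᴴ‖ = ‖A‖ := by
  rw [← l2_opNorm_conjTranspose, conjTranspose_mul, conjTranspose_conjTranspose,
    l2_opNorm_mul_of_conjTranspose_mul_self_eq_one hU, l2_opNorm_conjTranspose]

end L2OpNorm

lemma l2_opNorm_mul_transpose_of_transpose_mul_self_eq_one {l m n : Type*}
    [Fintype l] [DecidableEq l] [Fintype m] [DecidableEq m] [Fintype n] [DecidableEq n]
    (A : Matrix l n ℝ) {U : Matrix m n ℝ} (hU : Uᵀ * U = 1) : ‖A * Uᵀ‖ = ‖A‖ := by
  rw [← conjTranspose_eq_transpose_of_trivial] at hU ⊢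
  exact l2_opNorm_mul_conjTranspose_of_conjTranspose_mul_self_eq_one_s15 A hU

section Blocks

variable {α k m₁ m₂ n₁ n₂ p : Type*} [CommSemiring α]

lemma transpose_mul_self_fromBlocks_zero_eq_one [Fintype m₁] [Fintype m₂]
    [DecidableEq n₁] [DecidableEq n₂]
    {A : Matrix m₁ n₁ α} {D : Matrix m₂ n₂ α} (hA : Aᵀ * A = 1) (hD : Dᵀ * D = 1) :
    (fromBlocks A 0 0 D)ᵀ * fromBlocks A 0 0 D = 1 := by
  simp [fromBlocks_transpose, fromBlocks_multiply, hA, hD]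

lemma fromCols_mul_transpose_eq_mul_fromCols_mul_transpose_fromBlocks [Fintype k]
    [Fintype n₁] [Fintype n₂]
    (V : Matrix p k α) (S₁ : Matrix k n₁ α) (S₂ : Matrix k n₂ α)
    (W₁ : Matrix m₁ n₁ α) (W₂ : Matrix m₂ n₂ α) :
    fromCols (V * S₁ * W₁ᵀ) (V * S₂ * W₂ᵀ) = V * fromCols S₁ S₂ * (fromBlocks W₁ 0 0 W₂)ᵀ := by
  simp [fromBlocks_transpose, Matrix.mul_assoc, fromCols_mul_fromBlocks, mul_fromCols]

end Blocks

lemma transpose_mul_self_mul_eq_one {α l m n : Type*} [CommSemiring α] [Fintype m] [Fintype n]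
    [DecidableEq l] [DecidableEq n] {A : Matrix m n α} {B : Matrix n l α}
    (hA : Aᵀ * A = 1) (hB : Bᵀ * B = 1) : (A * B)ᵀ * (A * B) = 1 := by
  rw [transpose_mul, Matrix.mul_assoc, ← Matrix.mul_assoc Aᵀ, hA, Matrix.one_mul, hB]

end Matrix

theorem stmt_15_general {T R₁ R₂ K L m : Type*}
    [Fintype T] [DecidableEq T] [Fintype R₁] [DecidableEq R₁]
    [Fintype R₂] [DecidableEq R₂] [Fintype K] [DecidableEq K]
    [Fintype L] [DecidableEq L] [Fintype m]
    (V : Matrix T K ℝ) (S₁ S₂ : Matrix K K ℝ)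
    (W₁ : Matrix R₁ K ℝ) (W₂ : Matrix R₂ K ℝ)
    (hW₁ : W₁ᵀ * W₁ = 1) (hW₂ : W₂ᵀ * W₂ = 1)
    (P : Matrix (K ⊕ K) L ℝ) (Z : Matrix L K ℝ)
    (hP : Pᵀ * P = 1)
    (hPZ : fromRows S₁ᵀ S₂ᵀ = P * Z) :
    ∀ Q : Matrix T m ℝ,
      ‖(1 - Q * Qᵀ) * fromCols (V * S₁ * W₁ᵀ) (V * S₂ * W₂ᵀ)‖ =
        ‖(1 - Q * Qᵀ) * (V * Zᵀ)‖ := by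
  intro Q
  set W := fromBlocks W₁ 0 0 W₂
  have hWP : (W * P)ᵀ * (W * P) = 1 :=
    transpose_mul_self_mul_eq_one (transpose_mul_self_fromBlocks_zero_eq_one hW₁ hW₂) hP
  have hS : fromCols S₁ S₂ = Zᵀ * Pᵀ := by
    simpa [transpose_fromRows] using congrArg transpose hPZ
  calc ‖(1 - Q * Qᵀ) * fromCols (V * S₁ * W₁ᵀ) (V * S₂ * W₂ᵀ)‖
      = ‖(1 - Q * Qᵀ) * (V * Zᵀ) * (W * P)ᵀ‖ := by
        rw [fromCols_mul_transpose_eq_mul_fromCols_mul_transpose_fromBlocks, hS, transpose_mul]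
        simp only [W, Matrix.mul_assoc]
    _ = ‖(1 - Q * Qᵀ) * (V * Zᵀ)‖ := l2_opNorm_mul_transpose_of_transpose_mul_self_eq_one _ hWP

/-- Condensation of all admissible blocks attached to a row cluster: the concatenation
of blocks `V Sᵢ Wᵢᵀ` with isometric column bases can be replaced by the single small
matrix `V Zᵀ` without changing the compression error. -/
theorem stmt_15 {T R₁ R₂ K L m : Type*}
    [Fintype T] [DecidableEq T] [Fintype R₁] [DecidableEq R₁]
    [Fintype R₂] [DecidableEq R₂] [Fintype K] [DecidableEq K]
    [Fintype L] [DecidableEq L] [Fintype m] [DecidableEq m]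
    (V : Matrix T K ℝ) (S₁ S₂ : Matrix K K ℝ)
    (W₁ : Matrix R₁ K ℝ) (W₂ : Matrix R₂ K ℝ)
    (hW₁ : W₁ᵀ * W₁ = 1) (hW₂ : W₂ᵀ * W₂ = 1)
    (P : Matrix (K ⊕ K) L ℝ) (Z : Matrix L K ℝ)
    (hP : Pᵀ * P = 1)
    (hPZ : fromRows S₁ᵀ S₂ᵀ = P * Z) :
    ∀ Q : Matrix T m ℝ,
      ‖(1 - Q * Qᵀ) * fromCols (V * S₁ * W₁ᵀ) (V * S₂ * W₂ᵀ)‖ =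
        ‖(1 - Q * Qᵀ) * (V * Zᵀ)‖ :=
  stmt_15_general V S₁ S₂ W₁ W₂ hW₁ hW₂ P Z hP hPZ
end

section
/- Let X (T×S), V (S×K'), S_c (K'×K) be real matrices, W = Q_W * R_W an R×K matrix with Q_W isometric (Q_Wᵀ Q_W = 1) and R_W an L×K matrix, and let Q be a real T×m matrix. Set B := X * V * S_c * Wᵀ. Then ‖B − Q * Qᵀ * B‖₂ = ‖(1 − Q*Qᵀ) * X * V * S_c * R_Wᵀ‖₂ ≤ ‖(1 − Q*Qᵀ) * X * V‖₂ * ‖S_c * Wᵀ‖₂. -/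
/-!
Multiplying by a matrix with orthonormal columns preserves the spectral norm: by the
C*-identity, `‖U B‖² = ‖Bᴴ Uᴴ U B‖ = ‖Bᴴ B‖ = ‖B‖²`. Since `Wᵀ = R_Wᵀ Q_Wᵀ`, the projection
error `B - Q Qᵀ B` is `((1 - Q Qᵀ) X V S_c R_Wᵀ) Q_Wᵀ` and `S_c Wᵀ = (S_c R_Wᵀ) Q_Wᵀ`, so the
trailing `Q_Wᵀ` can be dropped from both norms; the bound is then submultiplicativity.
-/

open Matrix
open scoped Matrix.Norms.L2Operator

namespace Matrix

variable {𝕜 n p q : Type*} [RCLike 𝕜] [Fintype n] [DecidableEq n] [Fintype p] [Fintype q]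
  [DecidableEq q]

theorem l2_opNorm_mul_eq_of_conjTranspose_mul_self_eq_one {U : Matrix p q 𝕜}
    (hU : Uᴴ * U = 1) (B : Matrix q n 𝕜) : ‖U * B‖ = ‖B‖ := by
  have hsq : ‖U * B‖ * ‖U * B‖ = ‖B‖ * ‖B‖ := by
    rw [← l2_opNorm_conjTranspose_mul_self, ← l2_opNorm_conjTranspose_mul_self,
      conjTranspose_mul, Matrix.mul_assoc, ← Matrix.mul_assoc Uᴴ, hU, Matrix.one_mul]
  exact mul_self_inj (norm_nonneg _) (norm_nonneg _) |>.mp hsq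

theorem l2_opNorm_mul_conjTranspose_eq_of_conjTranspose_mul_self_eq_one [DecidableEq p]
    {U : Matrix p q 𝕜} (hU : Uᴴ * U = 1) (A : Matrix n q 𝕜) : ‖A * Uᴴ‖ = ‖A‖ := by
  rw [← l2_opNorm_conjTranspose, conjTranspose_mul, conjTranspose_conjTranspose,
    l2_opNorm_mul_eq_of_conjTranspose_mul_self_eq_one hU, l2_opNorm_conjTranspose]

end Matrix

theorem stmt_16_general {T S K' K R L m : Type*}
    [Fintype T] [DecidableEq T] [Fintype S]
    [Fintype K'] [DecidableEq K'] [Fintype K]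
    [Fintype R] [DecidableEq R] [Fintype L] [DecidableEq L]
    [Fintype m]
    (X : Matrix T S ℝ) (V : Matrix S K' ℝ) (S_c : Matrix K' K ℝ)
    (W : Matrix R K ℝ) (Q_W : Matrix R L ℝ) (R_W : Matrix L K ℝ)
    (hQW : Q_Wᵀ * Q_W = 1) (hW : W = Q_W * R_W)
    (Q : Matrix T m ℝ) :
    ‖X * V * S_c * Wᵀ - Q * Qᵀ * (X * V * S_c * Wᵀ)‖ =
        ‖(1 - Q * Qᵀ) * X * V * S_c * R_Wᵀ‖ ∧
      ‖(1 - Q * Qᵀ) * X * V * S_c * R_Wᵀ‖ ≤ ‖(1 - Q * Qᵀ) * X * V‖ * ‖S_c * Wᵀ‖ := by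
  rw [← conjTranspose_eq_transpose_of_trivial] at hQW
  have hWt : Wᵀ = R_Wᵀ * Q_Wᴴ := by
    rw [hW, transpose_mul, conjTranspose_eq_transpose_of_trivial]
  have error_eq : X * V * S_c * Wᵀ - Q * Qᵀ * (X * V * S_c * Wᵀ) =
      (1 - Q * Qᵀ) * X * V * S_c * R_Wᵀ * Q_Wᴴ := by
    rw [hWt]
    simp only [Matrix.sub_mul, Matrix.one_mul, Matrix.mul_assoc]
  refine ⟨?_, ?_⟩
  · rw [error_eq, l2_opNorm_mul_conjTranspose_eq_of_conjTranspose_mul_self_eq_one hQW]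
  · calc ‖(1 - Q * Qᵀ) * X * V * S_c * R_Wᵀ‖
        = ‖((1 - Q * Qᵀ) * X * V) * (S_c * R_Wᵀ)‖ := by simp only [Matrix.mul_assoc]
      _ ≤ ‖(1 - Q * Qᵀ) * X * V‖ * ‖S_c * R_Wᵀ‖ := l2_opNorm_mul _ _
      _ = ‖(1 - Q * Qᵀ) * X * V‖ * ‖S_c * Wᵀ‖ := by
        rw [hWt, ← Matrix.mul_assoc,
          l2_opNorm_mul_conjTranspose_eq_of_conjTranspose_mul_self_eq_one hQW]

/-- Error control for a product block `B = X V S_c Wᵀ`: the basis-weight factorization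
`W = Q_W R_W` turns the projection error into a computable small-matrix expression,
bounded by the product of the projection error of `X V` and `‖S_c Wᵀ‖₂`. -/
theorem stmt_16 {T S K' K R L m : Type*}
    [Fintype T] [DecidableEq T] [Fintype S] [DecidableEq S]
    [Fintype K'] [DecidableEq K'] [Fintype K] [DecidableEq K]
    [Fintype R] [DecidableEq R] [Fintype L] [DecidableEq L]
    [Fintype m] [DecidableEq m]
    (X : Matrix T S ℝ) (V : Matrix S K' ℝ) (S_c : Matrix K' K ℝ)
    (W : Matrix R K ℝ) (Q_W : Matrix R L ℝ) (R_W : Matrix L K ℝ)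
    (hQW : Q_Wᵀ * Q_W = 1) (hW : W = Q_W * R_W)
    (Q : Matrix T m ℝ) :
    ‖X * V * S_c * Wᵀ - Q * Qᵀ * (X * V * S_c * Wᵀ)‖ =
        ‖(1 - Q * Qᵀ) * X * V * S_c * R_Wᵀ‖ ∧
      ‖(1 - Q * Qᵀ) * X * V * S_c * R_Wᵀ‖ ≤ ‖(1 - Q * Qᵀ) * X * V‖ * ‖S_c * Wᵀ‖ :=
  stmt_16_general X V S_c W Q_W R_W hQW hW Q
end

section
/- Let Q_X be a real T×(K₁⊕T₂) orthogonal matrix (Q_Xᵀ Q_X = 1 and Q_X Q_Xᵀ = 1), Q̃ an isometric T₂×K₂ matrix, and Q := Q_X * fromBlocks 1 0 0 Q̃. Let V be a real T×S matrix and write Q_Xᵀ * V = fromRows M₁ M₂ with M₁ a K₁×S matrix and M₂ a T₂×S matrix. Then Q * Qᵀ * V = Q_X * fromRows M₁ (Q̃ * Q̃ᵀ * M₂), and consequently ‖V − Q * Qᵀ * V‖₂ = ‖M₂ − Q̃ * Q̃ᵀ * M₂‖₂. -/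
/-!
Since `Q_X` is orthogonal, `V = Q_X * fromRows M₁ M₂`, and `Q * Qᵀ` acts on these
coordinates blockwise: identity on `M₁`, `Q̃ * Q̃ᵀ` on `M₂`. Hence the error is `Q_X` applied to
`fromRows 0 (M₂ - Q̃ * Q̃ᵀ * M₂)`, and multiplying by a matrix with orthonormal columns, as well as
padding with zero rows, leaves the spectral norm unchanged because neither changes `Aᴴ * A`.
-/

open Matrix
open scoped Matrix.Norms.L2Operator

namespace Matrix

section L2OpNorm

variable {𝕜 m n m' l : Type*} [RCLike 𝕜] [Fintype m] [Fintype n] [DecidableEq n] [Fintype m']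
  [Fintype l] [DecidableEq l]

lemma l2_opNorm_eq_of_conjTranspose_mul_self_eq {A : Matrix m n 𝕜} {B : Matrix m' n 𝕜}
    (h : Aᴴ * A = Bᴴ * B) : ‖A‖ = ‖B‖ := by
  have hsq : ‖A‖ * ‖A‖ = ‖B‖ * ‖B‖ := by
    rw [← l2_opNorm_conjTranspose_mul_self, ← l2_opNorm_conjTranspose_mul_self, h]
  exact (mul_self_inj (norm_nonneg A) (norm_nonneg B)).mp hsq

lemma l2_opNorm_mul_of_conjTranspose_mul_self_eq_one_s17 {Q : Matrix m n 𝕜}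
    (hQ : Qᴴ * Q = 1) (A : Matrix n l 𝕜) : ‖Q * A‖ = ‖A‖ :=
  l2_opNorm_eq_of_conjTranspose_mul_self_eq <| by
    rw [conjTranspose_mul, Matrix.mul_assoc, ← Matrix.mul_assoc Qᴴ, hQ, Matrix.one_mul]

lemma l2_opNorm_fromRows_zero_left (B : Matrix m' n 𝕜) :
    ‖fromRows (0 : Matrix m n 𝕜) B‖ = ‖B‖ :=
  l2_opNorm_eq_of_conjTranspose_mul_self_eq <| by
    rw [conjTranspose_fromRows_eq_fromCols_conjTranspose, fromCols_mul_fromRows]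
    simp only [conjTranspose_zero, Matrix.zero_mul, zero_add]

end L2OpNorm

lemma fromBlocks_one_zero_zero_mul_transpose_mul_fromRows {R k₁ k₂ t₂ n : Type*} [Semiring R]
    [Fintype k₁] [DecidableEq k₁] [Fintype k₂] [Fintype t₂]
    (Q : Matrix t₂ k₂ R) (M₁ : Matrix k₁ n R) (M₂ : Matrix t₂ n R) :
    fromBlocks (1 : Matrix k₁ k₁ R) 0 0 Q * (fromBlocks (1 : Matrix k₁ k₁ R) 0 0 Q)ᵀ *
        fromRows M₁ M₂ = fromRows M₁ (Q * Qᵀ * M₂) := by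
  rw [fromBlocks_transpose, Matrix.mul_assoc, fromBlocks_mul_fromRows, fromBlocks_mul_fromRows]
  simp [Matrix.mul_assoc]

lemma fromRows_sub_fromRows_same_left {R m₁ m₂ n : Type*} [AddGroup R]
    (M₁ : Matrix m₁ n R) (M₂ N₂ : Matrix m₂ n R) :
    fromRows M₁ M₂ - fromRows M₁ N₂ = fromRows 0 (M₂ - N₂) := by
  ext (i | i) j <;> simp

end Matrix

theorem stmt_17_general {T T₂ K₁ K₂ S : Type*}
    [Fintype T] [DecidableEq T] [Fintype T₂] [DecidableEq T₂]
    [Fintype K₁] [DecidableEq K₁] [Fintype K₂]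
    [Fintype S] [DecidableEq S]
    (Q_X : Matrix T (K₁ ⊕ T₂) ℝ)
    (hQX₁ : Q_Xᵀ * Q_X = 1) (hQX₂ : Q_X * Q_Xᵀ = 1)
    (Qtilde : Matrix T₂ K₂ ℝ)
    (V : Matrix T S ℝ) (M₁ : Matrix K₁ S ℝ) (M₂ : Matrix T₂ S ℝ)
    (hM : Q_Xᵀ * V = fromRows M₁ M₂) :
    (Q_X * fromBlocks (1 : Matrix K₁ K₁ ℝ) 0 0 Qtilde) * (Q_X * fromBlocks (1 : Matrix K₁ K₁ ℝ) 0 0 Qtilde)ᵀ * V =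
        Q_X * fromRows M₁ (Qtilde * Qtildeᵀ * M₂) ∧
      ‖V - (Q_X * fromBlocks (1 : Matrix K₁ K₁ ℝ) 0 0 Qtilde) * (Q_X * fromBlocks (1 : Matrix K₁ K₁ ℝ) 0 0 Qtilde)ᵀ * V‖ =
        ‖M₂ - Qtilde * Qtildeᵀ * M₂‖ := by
  have hproj : (Q_X * fromBlocks (1 : Matrix K₁ K₁ ℝ) 0 0 Qtilde) *
      (Q_X * fromBlocks (1 : Matrix K₁ K₁ ℝ) 0 0 Qtilde)ᵀ * V =
      Q_X * fromRows M₁ (Qtilde * Qtildeᵀ * M₂) := by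
    rw [← fromBlocks_one_zero_zero_mul_transpose_mul_fromRows, ← hM, transpose_mul]
    simp only [Matrix.mul_assoc]
  have hV : V = Q_X * fromRows M₁ M₂ := by
    rw [← hM, ← Matrix.mul_assoc, hQX₂, Matrix.one_mul]
  refine ⟨hproj, ?_⟩
  rw [hproj, hV, ← Matrix.mul_sub, fromRows_sub_fromRows_same_left,
    l2_opNorm_mul_of_conjTranspose_mul_self_eq_one_s17 (by rwa [conjTranspose_eq_transpose_of_trivial]),
    l2_opNorm_fromRows_zero_left]

/-- Structure of the leaf compression step: after transforming by the orthogonal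
Householder factor `Q_X`, the top block is kept exactly and only the lower remainder
`M₂` is approximated, so the total compression error equals the error on the remainder. -/
theorem stmt_17 {T T₂ K₁ K₂ S : Type*}
    [Fintype T] [DecidableEq T] [Fintype T₂] [DecidableEq T₂]
    [Fintype K₁] [DecidableEq K₁] [Fintype K₂] [DecidableEq K₂]
    [Fintype S] [DecidableEq S]
    (Q_X : Matrix T (K₁ ⊕ T₂) ℝ)
    (hQX₁ : Q_Xᵀ * Q_X = 1) (hQX₂ : Q_X * Q_Xᵀ = 1)
    (Qtilde : Matrix T₂ K₂ ℝ) (hQt : Qtildeᵀ * Qtilde = 1)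
    (V : Matrix T S ℝ) (M₁ : Matrix K₁ S ℝ) (M₂ : Matrix T₂ S ℝ)
    (hM : Q_Xᵀ * V = fromRows M₁ M₂) :
    (Q_X * fromBlocks (1 : Matrix K₁ K₁ ℝ) 0 0 Qtilde) * (Q_X * fromBlocks (1 : Matrix K₁ K₁ ℝ) 0 0 Qtilde)ᵀ * V =
        Q_X * fromRows M₁ (Qtilde * Qtildeᵀ * M₂) ∧
      ‖V - (Q_X * fromBlocks (1 : Matrix K₁ K₁ ℝ) 0 0 Qtilde) * (Q_X * fromBlocks (1 : Matrix K₁ K₁ ℝ) 0 0 Qtilde)ᵀ * V‖ =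
        ‖M₂ - Qtilde * Qtildeᵀ * M₂‖ :=
  stmt_17_general Q_X hQX₁ hQX₂ Qtilde V M₁ M₂ hM
end
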